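/- Let ζ ∈ ℂ \ ℚ(i) have Hurwitz continued fraction partial quotients (a_n) with |a_n| ≤ M for all n and some M > 0. Then ζ is badly approximable: there exists C > 0 such that for all Gaussian integers p, q with q ≠ 0, |ζ - p/q| > C/|q|². In fact, C = (M+1)^{-1}(M+2)^{-2} works. -/

import Mathlib

open Complex Filter

/-- `z` is a Gaussian integer (as a complex number). -/
def IsGaussianInt (z : ℂ) : Prop := ∃ m n : ℤ, z = (m : ℂ) + (n : ℂ) * I

/-- `z` belongs to `ℚ(i)`. -/
def IsGaussianRational (z : ℂ) : Prop :=
  ∃ p q : ℂ, IsGaussianInt p ∧ IsGaussianInt q ∧ q ≠ 0 ∧ z = p / q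

/-- The fundamental domain `𝔉`. -/
def InFund (z : ℂ) : Prop :=
  -(1/2) ≤ z.re ∧ z.re < 1/2 ∧ -(1/2) ≤ z.im ∧ z.im < 1/2

/-- Nearest Gaussian integer. -/
noncomputable def nearGauss (z : ℂ) : ℂ :=
  (⌊z.re + 1/2⌋ : ℤ) + (⌊z.im + 1/2⌋ : ℤ) * I

/-- Complete quotients of the Hurwitz continued fraction of `z`. -/
noncomputable def hcfZ (z : ℂ) : ℕ → ℂ
  | 0 => z
  | n + 1 => 1 / (hcfZ z n - nearGauss (hcfZ z n))

/-- Partial quotients of the Hurwitz continued fraction of `z`. -/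
noncomputable def hcfA (z : ℂ) (n : ℕ) : ℂ := nearGauss (hcfZ z n)

/-- Numerators: `hcfP z (n+2) = p n`, with `p (-2) = 0`, `p (-1) = 1`. -/
noncomputable def hcfP (z : ℂ) : ℕ → ℂ
  | 0 => 0
  | 1 => 1
  | n + 2 => hcfA z n * hcfP z (n + 1) + hcfP z n

/-- Denominators: `hcfQ z (n+2) = q n`, with `q (-2) = 1`, `q (-1) = 0`. -/
noncomputable def hcfQ (z : ℂ) : ℕ → ℂ
  | 0 => 1
  | 1 => 0
  | n + 2 => hcfA z n * hcfQ z (n + 1) + hcfQ z n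

/-!
Let `ζₙ` be the complete quotients, `pₙ/qₙ` the convergents, and `Bₙ = ζₙ qₙ₋₁ + qₙ₋₂`, so that
`ζ = (ζₙ pₙ₋₁ + pₙ₋₂) / Bₙ` and `|qₙ₋₁ ζ - pₙ₋₁| = 1/|Bₙ|`. Since `Bₙ₊₁ = Bₙ ζₙ₊₁` and
`√2 ≤ |ζₙ₊₁| ≤ M + 1`, the `Bₙ` grow geometrically but at most by the factor `M + 1`; also
`|qₙ| ≤ 2|Bₙ|`. Given `p/q`, choose `n` with `|Bₙ| ≤ 2|q| < |Bₙ₊₁|`. As consecutive convergents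
have determinant `±1`, either `(p, q)` is a Gaussian multiple of `(pₙ, qₙ)`, and then
`|qζ - p| ≥ |qₙζ - pₙ| = 1/|Bₙ₊₁| ≥ 1/(2(M+1)|q|)`, or `pqₙ - pₙq` is a nonzero Gaussian integer,
and then `1 ≤ |q||qₙζ - pₙ| + |qₙ||qζ - p| < 1/2 + 4|q||qζ - p|`.
-/

theorem isGaussianInt_iff_mem_range {z : ℂ} :
    IsGaussianInt z ↔ z ∈ GaussianInt.toComplex.range := by
  constructor
  · rintro ⟨m, n, rfl⟩
    exact ⟨⟨m, n⟩, GaussianInt.toComplex_def' m n⟩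
  · rintro ⟨x, rfl⟩
    exact ⟨x.re, x.im, GaussianInt.toComplex_def x⟩

namespace IsGaussianInt

variable {a b : ℂ}

theorem zero : IsGaussianInt 0 := isGaussianInt_iff_mem_range.2 (zero_mem _)

theorem one : IsGaussianInt 1 := isGaussianInt_iff_mem_range.2 (one_mem _)

theorem add (ha : IsGaussianInt a) (hb : IsGaussianInt b) : IsGaussianInt (a + b) := by
  rw [isGaussianInt_iff_mem_range] at *
  exact add_mem ha hb

theorem sub (ha : IsGaussianInt a) (hb : IsGaussianInt b) : IsGaussianInt (a - b) := by
  rw [isGaussianInt_iff_mem_range] at *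
  exact sub_mem ha hb

theorem mul (ha : IsGaussianInt a) (hb : IsGaussianInt b) : IsGaussianInt (a * b) := by
  rw [isGaussianInt_iff_mem_range] at *
  exact mul_mem ha hb

theorem isGaussianRational (ha : IsGaussianInt a) : IsGaussianRational a :=
  ⟨a, 1, ha, one, one_ne_zero, (div_one a).symm⟩

theorem one_le_norm (ha : IsGaussianInt a) (h0 : a ≠ 0) : 1 ≤ ‖a‖ := by
  obtain ⟨x, rfl⟩ := isGaussianInt_iff_mem_range.1 ha
  have hx : x ≠ 0 := fun hx => h0 (by rw [hx, map_zero])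
  have h1 : (1 : ℝ) ≤ ‖GaussianInt.toComplex x‖ ^ 2 := by
    rw [Complex.sq_norm, ← GaussianInt.intCast_real_norm]
    exact_mod_cast GaussianInt.norm_pos.2 hx
  nlinarith [norm_nonneg (GaussianInt.toComplex x)]

end IsGaussianInt

theorem isGaussianInt_nearGauss (z : ℂ) : IsGaussianInt (nearGauss z) := ⟨_, _, rfl⟩

theorem sq_norm_sub_nearGauss_le (z : ℂ) : ‖z - nearGauss z‖ ^ 2 ≤ 1 / 2 := by
  have hre : (z - nearGauss z).re = z.re - ⌊z.re + 1/2⌋ := by simp [nearGauss]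
  have him : (z - nearGauss z).im = z.im - ⌊z.im + 1/2⌋ := by simp [nearGauss]
  rw [Complex.sq_norm, Complex.normSq_apply, hre, him]
  nlinarith [Int.floor_le (z.re + 1/2), Int.lt_floor_add_one (z.re + 1/2),
    Int.floor_le (z.im + 1/2), Int.lt_floor_add_one (z.im + 1/2)]

theorem isGaussianRational_of_one_div_sub {x g : ℂ} (hg : IsGaussianInt g)
    (h : IsGaussianRational (1 / (x - g))) : IsGaussianRational x := by
  obtain ⟨p, q, hp, hq, hq0, hpq⟩ := h
  have hx : x = g + q / p := by
    rw [← inv_div, ← hpq, one_div, inv_inv]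
    ring
  by_cases hp0 : p = 0
  · rw [hx, hp0, div_zero, add_zero]
    exact hg.isGaussianRational
  · exact ⟨g * p + q, p, (hg.mul hp).add hq, hp, hp0, by rw [hx]; field_simp⟩

section HurwitzContinuedFraction

variable {ζ : ℂ}

theorem isGaussianInt_hcfA (ζ : ℂ) (n : ℕ) : IsGaussianInt (hcfA ζ n) :=
  isGaussianInt_nearGauss _

theorem isGaussianInt_hcfP_hcfQ (ζ : ℂ) (n : ℕ) :
    IsGaussianInt (hcfP ζ n) ∧ IsGaussianInt (hcfQ ζ n) := by
  induction n using Nat.twoStepInduction with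
  | zero => exact ⟨.zero, .one⟩
  | one => exact ⟨.one, .zero⟩
  | more n ih₀ ih₁ =>
    exact ⟨((isGaussianInt_hcfA ζ n).mul ih₁.1).add ih₀.1,
      ((isGaussianInt_hcfA ζ n).mul ih₁.2).add ih₀.2⟩

theorem hcfP_mul_hcfQ_sub (ζ : ℂ) (n : ℕ) :
    hcfP ζ (n + 1) * hcfQ ζ n - hcfP ζ n * hcfQ ζ (n + 1) = (-1) ^ n := by
  induction n with
  | zero => simp [hcfP, hcfQ]
  | succ n ih =>
    simp only [hcfP, hcfQ, pow_succ]
    linear_combination -ih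

theorem sq_norm_hcfZ_sub_hcfA_le (ζ : ℂ) (n : ℕ) : ‖hcfZ ζ n - hcfA ζ n‖ ^ 2 ≤ 1 / 2 :=
  sq_norm_sub_nearGauss_le _

theorem norm_hcfZ_le (ζ : ℂ) (n : ℕ) : ‖hcfZ ζ n‖ ≤ ‖hcfA ζ n‖ + 1 := by
  have h := sq_norm_hcfZ_sub_hcfA_le ζ n
  have h1 : ‖hcfZ ζ n - hcfA ζ n‖ ≤ 1 := by nlinarith [norm_nonneg (hcfZ ζ n - hcfA ζ n)]
  calc ‖hcfZ ζ n‖ = ‖hcfA ζ n + (hcfZ ζ n - hcfA ζ n)‖ := by rw [add_sub_cancel]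
    _ ≤ ‖hcfA ζ n‖ + 1 := (norm_add_le _ _).trans (by linarith)

theorem not_isGaussianRational_hcfZ (hζ : ¬ IsGaussianRational ζ) (n : ℕ) :
    ¬ IsGaussianRational (hcfZ ζ n) := by
  induction n with
  | zero => exact hζ
  | succ n ih => exact fun h => ih (isGaussianRational_of_one_div_sub (isGaussianInt_hcfA ζ n) h)

theorem hcfZ_succ_mul_sub (hζ : ¬ IsGaussianRational ζ) (n : ℕ) :
    hcfZ ζ (n + 1) * (hcfZ ζ n - hcfA ζ n) = 1 := by
  have hne : hcfZ ζ n - hcfA ζ n ≠ 0 := fun h =>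
    not_isGaussianRational_hcfZ hζ n
      (sub_eq_zero.1 h ▸ (isGaussianInt_hcfA ζ n).isGaussianRational)
  exact one_div_mul_cancel hne

theorem two_le_sq_norm_hcfZ_succ (hζ : ¬ IsGaussianRational ζ) (n : ℕ) :
    2 ≤ ‖hcfZ ζ (n + 1)‖ ^ 2 := by
  have h := congrArg (‖·‖ ^ 2) (hcfZ_succ_mul_sub hζ n)
  simp only [norm_mul, mul_pow, norm_one, one_pow] at h
  nlinarith [sq_norm_hcfZ_sub_hcfA_le ζ n, sq_nonneg ‖hcfZ ζ (n + 1)‖]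

theorem one_le_norm_hcfA_succ (hζ : ¬ IsGaussianRational ζ) (n : ℕ) :
    1 ≤ ‖hcfA ζ (n + 1)‖ := by
  refine (isGaussianInt_hcfA ζ (n + 1)).one_le_norm fun h0 => ?_
  have h := sq_norm_hcfZ_sub_hcfA_le ζ (n + 1)
  rw [h0, sub_zero] at h
  linarith [two_le_sq_norm_hcfZ_succ hζ n]

end HurwitzContinuedFraction

/-- `ζ = (ζₙ pₙ₋₁ + pₙ₋₂) / hcfDen ζ n`, where `ζₙ = hcfZ ζ n`, `pₙ = hcfP ζ (n + 2)` and
`qₙ = hcfQ ζ (n + 2)`. -/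
noncomputable def hcfDen (ζ : ℂ) (n : ℕ) : ℂ := hcfZ ζ n * hcfQ ζ (n + 1) + hcfQ ζ n

section Denominators

variable {ζ : ℂ}

theorem hcfDen_zero (ζ : ℂ) : hcfDen ζ 0 = 1 := by simp [hcfDen, hcfQ]

theorem hcfDen_sub_hcfQ (ζ : ℂ) (n : ℕ) :
    hcfDen ζ n - hcfQ ζ (n + 2) = (hcfZ ζ n - hcfA ζ n) * hcfQ ζ (n + 1) := by
  simp only [hcfDen, hcfQ]
  ring

theorem hcfDen_succ (hζ : ¬ IsGaussianRational ζ) (n : ℕ) :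
    hcfDen ζ (n + 1) = hcfDen ζ n * hcfZ ζ (n + 1) := by
  simp only [hcfDen, hcfQ]
  linear_combination -hcfQ ζ (n + 1) * hcfZ_succ_mul_sub hζ n

theorem mul_hcfDen (hζ : ¬ IsGaussianRational ζ) (n : ℕ) :
    ζ * hcfDen ζ n = hcfZ ζ n * hcfP ζ (n + 1) + hcfP ζ n := by
  induction n with
  | zero => simp [hcfDen_zero, hcfZ, hcfP]
  | succ n ih =>
    rw [hcfDen_succ hζ, ← mul_assoc, ih]
    simp only [hcfP]
    linear_combination hcfP ζ (n + 1) * hcfZ_succ_mul_sub hζ n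

theorem norm_hcfQ_mul_sub_hcfP_mul_norm_hcfDen (hζ : ¬ IsGaussianRational ζ) (n : ℕ) :
    ‖hcfQ ζ (n + 1) * ζ - hcfP ζ (n + 1)‖ * ‖hcfDen ζ n‖ = 1 := by
  have h : (hcfQ ζ (n + 1) * ζ - hcfP ζ (n + 1)) * hcfDen ζ n = -(-1) ^ n := by
    have hζB := mul_hcfDen hζ n
    rw [← hcfP_mul_hcfQ_sub ζ n]
    unfold hcfDen at *
    linear_combination hcfQ ζ (n + 1) * hζB
  rw [← norm_mul, h, norm_neg, norm_pow, norm_neg, norm_one, one_pow]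

theorem two_mul_sq_norm_hcfDen_le (hζ : ¬ IsGaussianRational ζ) (n : ℕ) :
    2 * ‖hcfDen ζ n‖ ^ 2 ≤ ‖hcfDen ζ (n + 1)‖ ^ 2 := by
  rw [hcfDen_succ hζ, norm_mul, mul_pow]
  nlinarith [two_le_sq_norm_hcfZ_succ hζ n, sq_nonneg ‖hcfDen ζ n‖]

theorem two_pow_le_sq_norm_hcfDen (hζ : ¬ IsGaussianRational ζ) (n : ℕ) :
    (2 : ℝ) ^ n ≤ ‖hcfDen ζ n‖ ^ 2 := by
  induction n with
  | zero => simp [hcfDen_zero]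
  | succ n ih => rw [pow_succ']; linarith [two_mul_sq_norm_hcfDen_le hζ n]

theorem norm_hcfDen_succ_le (hζ : ¬ IsGaussianRational ζ) (n : ℕ) :
    ‖hcfDen ζ (n + 1)‖ ≤ (‖hcfA ζ (n + 1)‖ + 1) * ‖hcfDen ζ n‖ := by
  rw [hcfDen_succ hζ, norm_mul, mul_comm]
  exact mul_le_mul_of_nonneg_right (norm_hcfZ_le ζ (n + 1)) (norm_nonneg _)

theorem norm_hcfQ_add_two_le_of_sq_le (n : ℕ)
    (h : ‖hcfQ ζ (n + 1)‖ ^ 2 ≤ 2 * ‖hcfDen ζ n‖ ^ 2) :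
    ‖hcfQ ζ (n + 2)‖ ≤ 2 * ‖hcfDen ζ n‖ := by
  have hsq : (‖hcfZ ζ n - hcfA ζ n‖ * ‖hcfQ ζ (n + 1)‖) ^ 2 ≤ ‖hcfDen ζ n‖ ^ 2 := by
    rw [mul_pow]
    nlinarith [sq_norm_hcfZ_sub_hcfA_le ζ n, sq_nonneg ‖hcfQ ζ (n + 1)‖]
  have hle := (pow_le_pow_iff_left₀ (by positivity) (norm_nonneg _) two_ne_zero).1 hsq
  calc ‖hcfQ ζ (n + 2)‖
      = ‖hcfDen ζ n - (hcfZ ζ n - hcfA ζ n) * hcfQ ζ (n + 1)‖ := by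
        rw [← hcfDen_sub_hcfQ, sub_sub_cancel]
    _ ≤ ‖hcfDen ζ n‖ + ‖hcfZ ζ n - hcfA ζ n‖ * ‖hcfQ ζ (n + 1)‖ :=
        (norm_sub_le _ _).trans_eq (by rw [norm_mul])
    _ ≤ 2 * ‖hcfDen ζ n‖ := by linarith

theorem sq_norm_hcfQ_succ_le (hζ : ¬ IsGaussianRational ζ) (n : ℕ) :
    ‖hcfQ ζ (n + 1)‖ ^ 2 ≤ 2 * ‖hcfDen ζ n‖ ^ 2 := by
  induction n with
  | zero => simp [hcfQ, hcfDen_zero]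
  | succ n ih =>
    have h := norm_hcfQ_add_two_le_of_sq_le n ih
    nlinarith [two_mul_sq_norm_hcfDen_le hζ n, norm_nonneg (hcfQ ζ (n + 2))]

theorem norm_hcfQ_add_two_le (hζ : ¬ IsGaussianRational ζ) (n : ℕ) :
    ‖hcfQ ζ (n + 2)‖ ≤ 2 * ‖hcfDen ζ n‖ :=
  norm_hcfQ_add_two_le_of_sq_le n (sq_norm_hcfQ_succ_le hζ n)

theorem exists_norm_hcfDen_le_lt (hζ : ¬ IsGaussianRational ζ) {c : ℝ} (hc : 1 ≤ c) :
    ∃ n, ‖hcfDen ζ n‖ ≤ c ∧ c < ‖hcfDen ζ (n + 1)‖ := by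
  have hunbdd : ∃ n, c < ‖hcfDen ζ n‖ := by
    obtain ⟨n, hn⟩ := pow_unbounded_of_one_lt (c ^ 2) one_lt_two
    refine ⟨n, (pow_lt_pow_iff_left₀ (by linarith) (norm_nonneg _) two_ne_zero).1 ?_⟩
    linarith [two_pow_le_sq_norm_hcfDen hζ n]
  obtain ⟨n, hle, hlt⟩ := Nat.exists_not_and_succ_of_not_zero_of_exists
    (by rw [hcfDen_zero, norm_one]; exact hc.not_gt) hunbdd
  exact ⟨n, not_lt.1 hle, hlt⟩

end Denominators

section UnimodularPairs

variable {P Q P' Q' p q : ℂ}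

theorem exists_isGaussianInt_eq_mul_of_mul_eq_mul (hP : IsGaussianInt P) (hQ : IsGaussianInt Q)
    (hP' : IsGaussianInt P') (hQ' : IsGaussianInt Q') (hp : IsGaussianInt p)
    (hq : IsGaussianInt q) (hdet : (P * Q' - P' * Q) ^ 2 = 1) (hpq : p * Q = P * q) :
    ∃ h, IsGaussianInt h ∧ p = h * P ∧ q = h * Q := by
  set u := P * Q' - P' * Q
  refine ⟨u * (p * Q' - P' * q),
    ((hP.mul hQ').sub (hP'.mul hQ)).mul ((hp.mul hQ').sub (hP'.mul hq)), ?_, ?_⟩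
  · linear_combination (-u * P') * hpq - p * hdet
  · linear_combination (-u * Q') * hpq - q * hdet

theorem norm_mul_sub_le_or_one_le (hP : IsGaussianInt P) (hQ : IsGaussianInt Q)
    (hP' : IsGaussianInt P') (hQ' : IsGaussianInt Q') (hp : IsGaussianInt p)
    (hq : IsGaussianInt q) (hdet : (P * Q' - P' * Q) ^ 2 = 1) (hq0 : q ≠ 0) (ζ : ℂ) :
    ‖Q * ζ - P‖ ≤ ‖q * ζ - p‖ ∨ 1 ≤ ‖q‖ * ‖Q * ζ - P‖ + ‖Q‖ * ‖q * ζ - p‖ := by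
  by_cases hpq : p * Q = P * q
  · left
    obtain ⟨h, hh, rfl, rfl⟩ :=
      exists_isGaussianInt_eq_mul_of_mul_eq_mul hP hQ hP' hQ' hp hq hdet hpq
    have h1 : 1 ≤ ‖h‖ := hh.one_le_norm (left_ne_zero_of_mul hq0)
    calc ‖Q * ζ - P‖ ≤ ‖h‖ * ‖Q * ζ - P‖ := le_mul_of_one_le_left (norm_nonneg _) h1
      _ = ‖h * Q * ζ - h * P‖ := by rw [← norm_mul]; ring_nf
  · right
    calc 1 ≤ ‖p * Q - P * q‖ := ((hp.mul hQ).sub (hP.mul hq)).one_le_norm (sub_ne_zero.2 hpq)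
      _ = ‖q * (Q * ζ - P) - Q * (q * ζ - p)‖ := by ring_nf
      _ ≤ ‖q‖ * ‖Q * ζ - P‖ + ‖Q‖ * ‖q * ζ - p‖ := by
        rw [← norm_mul, ← norm_mul]; exact norm_sub_le _ _

end UnimodularPairs

theorem inv_le_norm_mul_norm_mul_sub {ζ p q : ℂ} {M : ℝ} (hζ : ¬ IsGaussianRational ζ)
    (hbound : ∀ n, ‖hcfA ζ n‖ ≤ M) (hp : IsGaussianInt p) (hq : IsGaussianInt q) (hq0 : q ≠ 0) :
    min (2 * (M + 1))⁻¹ 8⁻¹ ≤ ‖q‖ * ‖q * ζ - p‖ := by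
  have hq1 := hq.one_le_norm hq0
  obtain ⟨n, hle, hlt⟩ := exists_norm_hcfDen_le_lt hζ (c := 2 * ‖q‖) (by linarith)
  have herr := norm_hcfQ_mul_sub_hcfP_mul_norm_hcfDen hζ (n + 1)
  have hdet : (hcfP ζ (n + 2) * hcfQ ζ (n + 1) - hcfP ζ (n + 1) * hcfQ ζ (n + 2)) ^ 2 = 1 := by
    rw [hcfP_mul_hcfQ_sub, ← pow_mul, mul_comm, pow_mul, neg_one_sq, one_pow]
  obtain ⟨hP, hQ⟩ := isGaussianInt_hcfP_hcfQ ζ (n + 2)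
  obtain ⟨hP', hQ'⟩ := isGaussianInt_hcfP_hcfQ ζ (n + 1)
  set e := ‖hcfQ ζ (n + 2) * ζ - hcfP ζ (n + 2)‖
  set x := ‖q * ζ - p‖
  have hx : 0 ≤ x := norm_nonneg _
  rcases norm_mul_sub_le_or_one_le hP hQ hP' hQ' hp hq hdet hq0 ζ with h | h
  · have hM : 0 ≤ M := (norm_nonneg _).trans (hbound 0)
    have hB : ‖hcfDen ζ (n + 1)‖ ≤ 2 * (M + 1) * ‖q‖ :=
      calc ‖hcfDen ζ (n + 1)‖ ≤ (‖hcfA ζ (n + 1)‖ + 1) * ‖hcfDen ζ n‖ :=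
            norm_hcfDen_succ_le hζ n
        _ ≤ (M + 1) * (2 * ‖q‖) := by gcongr; exact hbound _
        _ = 2 * (M + 1) * ‖q‖ := by ring
    refine min_le_of_left_le ((inv_le_iff_one_le_mul₀' (by positivity)).2 ?_)
    calc 1 = e * ‖hcfDen ζ (n + 1)‖ := herr.symm
      _ ≤ x * (2 * (M + 1) * ‖q‖) := by gcongr
      _ = 2 * (M + 1) * (‖q‖ * x) := by ring
  · have hQn := norm_hcfQ_add_two_le hζ n
    have hqe : 2 * (‖q‖ * e) < 1 := by
      calc 2 * (‖q‖ * e) = e * (2 * ‖q‖) := by ring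
        _ < e * ‖hcfDen ζ (n + 1)‖ := mul_lt_mul_of_pos_left hlt
          (pos_of_mul_pos_left (herr ▸ one_pos) (norm_nonneg (hcfDen ζ (n + 1))))
        _ = 1 := herr
    have hQq : ‖hcfQ ζ (n + 2)‖ * x ≤ 4 * ‖q‖ * x :=
      mul_le_mul_of_nonneg_right (by linarith) hx
    exact min_le_of_right_le (by linarith)

theorem bounded_pq_implies_bad_general (ζ : ℂ) (hζ : ¬ IsGaussianRational ζ) (M : ℝ)
    (hbound : ∀ n : ℕ, ‖hcfA ζ n‖ ≤ M) :
    ∀ p q : ℂ, IsGaussianInt p → IsGaussianInt q → q ≠ 0 →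
      (M + 1)⁻¹ * (M + 2)⁻¹ ^ 2 / ‖q‖ ^ 2 < ‖ζ - p / q‖ := by
  intro p q hp hq hq0
  have hM : 1 ≤ M := (one_le_norm_hcfA_succ hζ 0).trans (hbound 1)
  have hC : (M + 1)⁻¹ * (M + 2)⁻¹ ^ 2 < min (2 * (M + 1))⁻¹ 8⁻¹ := by
    rw [inv_pow, ← mul_inv]
    refine lt_min ?_ ?_ <;> apply inv_strictAnti₀ (by positivity) <;> nlinarith
  have hq' : 0 < ‖q‖ := norm_pos_iff.2 hq0
  have hbad := hC.trans_le (inv_le_norm_mul_norm_mul_sub hζ hbound hp hq hq0)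
  rw [show ζ - p / q = (q * ζ - p) / q by field_simp, norm_div, div_lt_div_iff₀ (by positivity) hq']
  nlinarith

/-- bounded partial quotients imply badly approximable, with explicit
constant `C = (M+1)⁻¹ (M+2)⁻²`. -/
theorem bounded_pq_implies_bad (ζ : ℂ) (hζ : ¬ IsGaussianRational ζ) (M : ℝ) (hM : 0 < M)
    (hbound : ∀ n : ℕ, ‖hcfA ζ n‖ ≤ M) :
    ∀ p q : ℂ, IsGaussianInt p → IsGaussianInt q → q ≠ 0 →
      (M + 1)⁻¹ * (M + 2)⁻¹ ^ 2 / ‖q‖ ^ 2 < ‖ζ - p / q‖ :=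
  bounded_pq_implies_bad_general ζ hζ M hbound
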